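/- arXiv:quant-ph/0505095 — 2 statements merged into one kernel-verified Lean document; each statement's English description precedes it below -/
import Mathlib

section
/- Let P and Q be POVMs on ℂ^d with the same finite outcome set, and assume Q is abelian, i.e. its elements pairwise commute: Q_e Q_f = Q_f Q_e for all outcomes e, f. Then Rng(Q) ⊆ Rng(P) if and only if P ≻ Q, i.e. if and only if there is a finite Kraus family (A_k) with ∑_k A_kᴴ A_k = 1 and ∑_k A_kᴴ P_e A_k = Q_e for every outcome e. -/
open Matrix BigOperators
open scoped ComplexOrder

/-- A POVM on `ℂ^d` with finite outcome set `E`. -/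
def IsPOVM {d : ℕ} {E : Type} [Fintype E] (P : E → Matrix (Fin d) (Fin d) ℂ) : Prop :=
  (∀ e, (P e).PosSemidef) ∧ ∑ e, P e = 1

/-- The range of a POVM: all vectors of outcome probabilities `(Tr(ρ P_e))_e` as `ρ`
ranges over density matrices. -/
def Rng {d : ℕ} {E : Type} [Fintype E]
    (P : E → Matrix (Fin d) (Fin d) ℂ) : Set (E → ℝ) :=
  {p | ∃ ρ : Matrix (Fin d) (Fin d) ℂ, ρ.PosSemidef ∧ ρ.trace = 1 ∧
    ∀ e, (ρ * P e).trace = (p e : ℂ)}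

/-- `Cleaner P Q` (`P ≻ Q`): there is a quantum channel in the Heisenberg picture,
given by a finite Kraus family, mapping `P` to `Q`. -/
def Cleaner {d : ℕ} {E : Type} [Fintype E]
    (P Q : E → Matrix (Fin d) (Fin d) ℂ) : Prop :=
  ∃ (n : ℕ) (A : Fin n → Matrix (Fin d) (Fin d) ℂ),
    ∑ k, (A k)ᴴ * A k = 1 ∧ ∀ e, ∑ k, (A k)ᴴ * P e * A k = Q e

section Aux
open Matrix BigOperators
open scoped ComplexOrder

variable {d : ℕ}

lemma outer_conjT (a b : Fin d → ℂ) :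
    (vecMulVec a (star b))ᴴ = vecMulVec b (star a) := by
  ext i j
  simp [vecMulVec_apply, conjTranspose_apply, mul_comm]

lemma mul_outer (M : Matrix (Fin d) (Fin d) ℂ) (a b : Fin d → ℂ) :
    M * vecMulVec a b = vecMulVec (M *ᵥ a) b := by
  ext i j
  simp [vecMulVec_apply, mul_apply, mulVec, dotProduct, Finset.sum_mul, mul_assoc]

lemma smul_outer (c : ℂ) (a b : Fin d → ℂ) :
    vecMulVec (c • a) b = c • vecMulVec a b := by
  ext i j
  simp [vecMulVec_apply, mul_assoc]

lemma outer_mul_mul_outer (a b c e : Fin d → ℂ) (X : Matrix (Fin d) (Fin d) ℂ) :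
    vecMulVec a (star b) * X * vecMulVec c (star e)
      = (star b ⬝ᵥ X *ᵥ c) • vecMulVec a (star e) := by
  ext i j
  simp only [mul_apply, vecMulVec_apply, Matrix.smul_apply, dotProduct, mulVec, Pi.star_apply,
    smul_eq_mul, Finset.sum_mul, Finset.mul_sum]
  rw [Finset.sum_comm]
  apply Finset.sum_congr rfl; intro k _
  apply Finset.sum_congr rfl; intro l _
  ring

lemma trace_outer_mul (w : Fin d → ℂ) (M : Matrix (Fin d) (Fin d) ℂ) :
    (vecMulVec w (star w) * M).trace = star w ⬝ᵥ M *ᵥ w := by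
  simp only [trace, diag, mul_apply, vecMulVec_apply, dotProduct, mulVec, Pi.star_apply,
    Finset.mul_sum]
  rw [Finset.sum_comm]
  apply Finset.sum_congr rfl; intro k _
  apply Finset.sum_congr rfl; intro i _
  ring

lemma sum_outer_rows (B : Matrix (Fin d) (Fin d) ℂ) :
    ∑ k, vecMulVec (fun j => star (B k j)) (star (fun j => star (B k j))) = Bᴴ * B := by
  ext a b
  simp [Matrix.sum_apply, vecMulVec_apply, mul_apply, conjTranspose_apply, mul_comm]

lemma psd_sum {d : ℕ} {ι : Type*} (s : Finset ι) (f : ι → Matrix (Fin d) (Fin d) ℂ)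
    (h : ∀ i ∈ s, (f i).PosSemidef) : (∑ i ∈ s, f i).PosSemidef :=
  Finset.sum_induction f _ (fun _ _ ha hb => ha.add hb) Matrix.PosSemidef.zero h

local notation "⟪" x ", " y "⟫" => @inner ℂ _ _ x y

lemma joint_eigen {d : ℕ} {E : Type} [Fintype E] (Q : E → Matrix (Fin d) (Fin d) ℂ)
    (hQ : ∀ e, (Q e).PosSemidef) (habel : ∀ e f, Q e * Q f = Q f * Q e) :
    ∃ (ι : Type) (_ : Fintype ι) (w : ι → (Fin d → ℂ)) (q : E → ι → ℂ),
      (∑ i, vecMulVec (w i) (star (w i)) = 1) ∧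
      (∀ i, star (w i) ⬝ᵥ w i = 1) ∧
      (∀ e i, Q e *ᵥ w i = q e i • w i) := by
  classical
  set T : E → Module.End ℂ (EuclideanSpace ℂ (Fin d)) :=
    fun e => Matrix.toEuclideanLin (Q e) with hTdef
  have hsym : ∀ e, (T e).IsSymmetric := fun e => Matrix.isHermitian_iff_isSymmetric.mp (hQ e).1
  have hmul : ∀ (M N : Matrix (Fin d) (Fin d) ℂ),
      Matrix.toEuclideanLin (M * N) = Matrix.toEuclideanLin M * Matrix.toEuclideanLin N := by
    intro M N
    ext x
    simp [Matrix.toEuclideanLin_apply, Matrix.mulVec_mulVec, Module.End.mul_apply]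
  have hcomm : Pairwise (Function.onFun Commute T) := by
    intro e f _
    show T e * T f = T f * T e
    simp only [hTdef]
    rw [← hmul, ← hmul, habel]
  have htop := LinearMap.IsSymmetric.iSup_iInf_eq_top_of_commute hsym hcomm
  set V : (E → ℂ) → Submodule ℂ (EuclideanSpace ℂ (Fin d)) :=
    fun χ => ⨅ e, Module.End.eigenspace (T e) (χ e) with hVdef
  have hcpt : IsCompactElement (⊤ : Submodule ℂ (EuclideanSpace ℂ (Fin d))) :=
    (Submodule.fg_iff_compact _).mp Module.Finite.fg_top
  obtain ⟨s, hs⟩ := CompleteLattice.IsCompactElement.exists_finset_of_le_iSup _ hcpt V htop.ge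
  -- orthonormal basis vectors of each joint eigenspace
  set ι := (χ : {x // x ∈ s}) × Fin (Module.finrank ℂ (V χ.1)) with hιdef
  set w0 : ι → EuclideanSpace ℂ (Fin d) :=
    fun i => (stdOrthonormalBasis ℂ (V i.1.1) i.2 : EuclideanSpace ℂ (Fin d)) with hw0def
  have hw0mem : ∀ i : ι, w0 i ∈ V i.1.1 := fun i => SetLike.coe_mem _
  have honb : Orthonormal ℂ w0 := by
    have hOF := (LinearMap.IsSymmetric.orthogonalFamily_iInf_eigenspaces hsym).comp
      (Subtype.coe_injective (p := fun x => x ∈ s))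
    have h := hOF.orthonormal_sigma_orthonormal
      (v_family := fun χ : {x // x ∈ s} => (stdOrthonormalBasis ℂ (V χ.1)))
      (fun χ => (stdOrthonormalBasis ℂ (V χ.1)).orthonormal)
    exact h
  have hspan : ⊤ ≤ Submodule.span ℂ (Set.range w0) := by
    refine le_trans hs ?_
    refine iSup_le fun χ => iSup_le fun hχ => ?_
    intro x hx
    have hx' : (⟨x, hx⟩ : V χ) ∈ (⊤ : Submodule ℂ (V χ)) := trivial
    rw [← (stdOrthonormalBasis ℂ (V χ)).toBasis.span_eq] at hx'
    have hmem : x ∈ Submodule.map (V χ).subtype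
        (Submodule.span ℂ (Set.range ((stdOrthonormalBasis ℂ (V χ)).toBasis))) :=
      ⟨_, hx', rfl⟩
    rw [Submodule.map_span] at hmem
    refine Submodule.span_mono ?_ hmem
    rintro y ⟨z, ⟨k, rfl⟩, rfl⟩
    exact ⟨⟨⟨χ, hχ⟩, k⟩, by simp [hw0def]⟩
  let B : OrthonormalBasis ι ℂ (EuclideanSpace ℂ (Fin d)) := OrthonormalBasis.mk honb hspan
  have hres : ∀ x : EuclideanSpace ℂ (Fin d), ∑ i, ⟪w0 i, x⟫ • w0 i = x := by
    intro x
    have h := B.sum_repr' x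
    simpa only [B, OrthonormalBasis.coe_mk] using h
  -- move to plain functions
  set w : ι → (Fin d → ℂ) := fun i => (WithLp.equiv 2 (Fin d → ℂ)) (w0 i) with hwdef
  have hres' : ∀ x : Fin d → ℂ, ∑ i, (star (w i) ⬝ᵥ x) • w i = x := by
    intro x
    have h := congrArg (WithLp.linearEquiv 2 ℂ (Fin d → ℂ))
      (hres ((WithLp.equiv 2 (Fin d → ℂ)).symm x))
    rw [map_sum] at h
    simp only [_root_.map_smul] at h
    simpa [hwdef, WithLp.linearEquiv, EuclideanSpace.inner_eq_star_dotProduct, dotProduct_comm x] using h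
  refine ⟨ι, inferInstance, w, fun e i => i.1.1 e, ?_, ?_, ?_⟩
  · ext a b
    have h := congrFun (hres' (Pi.single b 1)) a
    simp only [Finset.sum_apply, Pi.smul_apply, smul_eq_mul, dotProduct_single, mul_one,
      Pi.single_apply] at h
    rw [Matrix.sum_apply]
    simp only [vecMulVec_apply, Pi.star_apply]
    rw [Matrix.one_apply, ← h]
    exact Finset.sum_congr rfl fun x _ => mul_comm _ _
  · intro i
    have h1 : ‖w0 i‖ = 1 := honb.1 i
    have h2 : ⟪w0 i, w0 i⟫ = 1 := by
      rw [inner_self_eq_norm_sq_to_K, h1]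
      norm_num
    rw [EuclideanSpace.inner_eq_star_dotProduct, dotProduct_comm] at h2
    exact h2
  · intro e i
    have hmem : w0 i ∈ Module.End.eigenspace (T e) (i.1.1 e) := by
      have h0 : w0 i ∈ ⨅ e, Module.End.eigenspace (T e) (i.1.1 e) := hw0mem i
      exact (Submodule.mem_iInf _).mp h0 e
    rw [Module.End.mem_eigenspace_iff] at hmem
    have h := congrArg (WithLp.equiv 2 (Fin d → ℂ)) hmem
    simpa [hTdef, hwdef, Matrix.ofLp_toEuclideanLin_apply] using h

/-- for an abelian POVM `Q` (pairwise commuting elements),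
`Rng Q ⊆ Rng P` is equivalent to `P ≻ Q`. -/
theorem clean_povm_stmt6 (d : ℕ) (hd : 1 ≤ d) (E : Type) [Fintype E]
    (P Q : E → Matrix (Fin d) (Fin d) ℂ) (hP : IsPOVM P) (hQ : IsPOVM Q)
    (habel : ∀ e f, Q e * Q f = Q f * Q e) :
    Rng Q ⊆ Rng P ↔ Cleaner P Q := by
  constructor
  · intro hsub
    classical
    obtain ⟨ι, instι, w, q, hone, hnorm, heig⟩ := joint_eigen Q hQ.1 habel
    -- the density matrices witnessing each joint eigenvalue tuple in Rng Q
    have hσtr : ∀ i e, (vecMulVec (w i) (star (w i)) * Q e).trace = q e i := by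
      intro i e
      rw [trace_outer_mul, heig e i, dotProduct_smul, hnorm i, smul_eq_mul, mul_one]
    have hσpsd : ∀ i, (vecMulVec (w i) (star (w i))).PosSemidef := by
      intro i
      refine Matrix.PosSemidef.of_dotProduct_mulVec_nonneg ?_ ?_
      · exact (outer_conjT (w i) (w i)).trans rfl
      · intro x
        have : star x ⬝ᵥ (vecMulVec (w i) (star (w i)) *ᵥ x)
            = star (star (w i) ⬝ᵥ x) * (star (w i) ⬝ᵥ x) := by
          simp only [dotProduct, mulVec, vecMulVec_apply, Pi.star_apply, star_sum, star_mul',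
            star_star, Finset.mul_sum, Finset.sum_mul]
          rw [Finset.sum_comm]
          apply Finset.sum_congr rfl; intro k _
          apply Finset.sum_congr rfl; intro l _
          ring
        rw [this]
        exact star_mul_self_nonneg _
    have hσ1 : ∀ i, (vecMulVec (w i) (star (w i))).trace = 1 := by
      intro i
      have : (vecMulVec (w i) (star (w i))).trace
          = (vecMulVec (w i) (star (w i)) * 1).trace := by rw [mul_one]
      rw [this, trace_outer_mul, Matrix.one_mulVec]
      exact hnorm i
    -- realness of eigenvalues
    have hqre : ∀ e i, ((q e i).re : ℂ) = q e i := by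
      intro e i
      have hps : (0 : ℂ) ≤ q e i := by
        rw [← hσtr i e, trace_outer_mul]
        exact (hQ.1 e).dotProduct_mulVec_nonneg (w i)
      have him : (q e i).im = 0 := by
        have := Complex.nonneg_iff.mp hps
        exact this.2.symm ▸ rfl
      exact Complex.ext rfl (by simp [him])
    -- pull each eigenvalue tuple through the range inclusion
    have hmem : ∀ i, (fun e => (q e i).re) ∈ Rng P := by
      intro i
      apply hsub
      exact ⟨vecMulVec (w i) (star (w i)), hσpsd i, hσ1 i, fun e => by rw [hσtr i e, hqre e i]⟩
    choose ρ hρpsd hρtr hρtrace using hmem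
    choose B hB using fun i => show ∃ B : Matrix (Fin d) (Fin d) ℂ, ρ i = Bᴴ * B from (by open scoped MatrixOrder in exact (CStarAlgebra.nonneg_iff_eq_star_mul_self.mp (hρpsd i).nonneg))
    -- the Kraus operators
    set v : ι → Fin d → Fin d → ℂ := fun i k j => star (B i k j) with hvdef
    set A' : ι × Fin d → Matrix (Fin d) (Fin d) ℂ :=
      fun z => vecMulVec (v z.1 z.2) (star (w z.1)) with hA'def
    have hquad : ∀ (i : ι) (X : Matrix (Fin d) (Fin d) ℂ),
        ∑ k, (star (v i k) ⬝ᵥ X *ᵥ v i k) = (ρ i * X).trace := by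
      intro i X
      have h1 : ∀ k, star (v i k) ⬝ᵥ X *ᵥ v i k
          = (vecMulVec (v i k) (star (v i k)) * X).trace := fun k => (trace_outer_mul _ _).symm
      simp_rw [h1, ← trace_sum, ← Finset.sum_mul]
      rw [sum_outer_rows (B i), ← hB i]
    have hkey : ∀ X : Matrix (Fin d) (Fin d) ℂ,
        ∑ z : ι × Fin d, (A' z)ᴴ * X * A' z
          = ∑ i, ((ρ i * X).trace) • vecMulVec (w i) (star (w i)) := by
      intro X
      rw [Fintype.sum_prod_type]
      apply Finset.sum_congr rfl
      intro i _
      have : ∀ k : Fin d, (A' (i, k))ᴴ * X * A' (i, k)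
          = (star (v i k) ⬝ᵥ X *ᵥ v i k) • vecMulVec (w i) (star (w i)) := by
        intro k
        rw [hA'def]
        simp only
        rw [outer_conjT, outer_mul_mul_outer]
      simp_rw [this, ← Finset.sum_smul, hquad i X]
    -- reindex to Fin n
    refine ⟨Fintype.card (ι × Fin d), A' ∘ (Fintype.equivFin (ι × Fin d)).symm, ?_, ?_⟩
    · simp only [Function.comp_apply]
      rw [Equiv.sum_comp ((Fintype.equivFin (ι × Fin d)).symm) (fun z => (A' z)ᴴ * A' z)]
      have h1 : ∀ z : ι × Fin d, (A' z)ᴴ * A' z = (A' z)ᴴ * 1 * A' z := by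
        intro z; rw [mul_one]
      simp_rw [h1, hkey 1, mul_one, hρtr]
      simp only [Complex.ofReal_one, one_smul]
      exact hone
    · intro e
      simp only [Function.comp_apply]
      rw [Equiv.sum_comp ((Fintype.equivFin (ι × Fin d)).symm)
        (fun z => (A' z)ᴴ * P e * A' z), hkey (P e)]
      simp_rw [hρtrace _ e, hqre]
      -- ∑ i, q e i • outer (w i) = Q e
      calc ∑ i, q e i • vecMulVec (w i) (star (w i))
          = ∑ i, Q e * vecMulVec (w i) (star (w i)) := by
            apply Finset.sum_congr rfl; intro i _
            rw [mul_outer, heig e i, smul_outer]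
        _ = Q e := by rw [← Finset.mul_sum, hone, mul_one]
  · rintro ⟨n, A, hA1, hA2⟩ p ⟨ρ, hρ, htr, hpe⟩
    refine ⟨∑ k, A k * ρ * (A k)ᴴ, psd_sum _ _ (fun k _ => hρ.mul_mul_conjTranspose_same (A k)),
      ?_, ?_⟩
    · have h : ∀ k : Fin n, (A k * ρ * (A k)ᴴ).trace = (ρ * ((A k)ᴴ * A k)).trace := by
        intro k
        rw [mul_assoc, trace_mul_comm, mul_assoc]
      rw [trace_sum]
      simp_rw [h, ← trace_sum, ← Matrix.mul_sum, hA1, mul_one, htr]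
    · intro e
      have h : ∀ k : Fin n, (A k * ρ * (A k)ᴴ * P e).trace
          = (ρ * ((A k)ᴴ * P e * A k)).trace := by
        intro k
        rw [mul_assoc, mul_assoc, trace_mul_comm, mul_assoc]
      rw [Finset.sum_mul, trace_sum]
      simp_rw [h, ← trace_sum, ← Matrix.mul_sum, hA2 e, hpe e]
end Aux
end

section
/- (Characterization of the cleanness ordering for effects.) Let P and Q be d×d complex Hermitian matrices with 0 ≤ P ≤ 1 and 0 ≤ Q ≤ 1 in the Loewner order (effects). Then there exists a finite Kraus family (A_k) with ∑_k A_kᴴ A_k = 1 and ∑_k A_kᴴ P A_k = Q if and only if [λ_m(Q), λ_M(Q)] ⊆ [λ_m(P), λ_M(P)], i.e. λ_m(P) ≤ λ_m(Q) and λ_M(Q) ≤ λ_M(P). -/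
open Matrix BigOperators
open scoped ComplexOrder

/-- The largest eigenvalue of a Hermitian matrix, characterized via the Loewner order:
`λ_M(X) = inf {c : ℝ | X ≤ c • 1}`. -/
noncomputable def lamMax {d : ℕ} (X : Matrix (Fin d) (Fin d) ℂ) : ℝ :=
  sInf {c : ℝ | ((c : ℂ) • (1 : Matrix (Fin d) (Fin d) ℂ) - X).PosSemidef}

/-- The smallest eigenvalue of a Hermitian matrix, characterized via the Loewner order:
`λ_m(X) = sup {c : ℝ | c • 1 ≤ X}`. -/
noncomputable def lamMin {d : ℕ} (X : Matrix (Fin d) (Fin d) ℂ) : ℝ :=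
  sSup {c : ℝ | (X - (c : ℂ) • (1 : Matrix (Fin d) (Fin d) ℂ)).PosSemidef}

variable {d : ℕ}

lemma unit_dot (X : Matrix (Fin d) (Fin d) ℂ) (hX : X.IsHermitian) (i : Fin d) :
    dotProduct (star ⇑(hX.eigenvectorBasis i)) ⇑(hX.eigenvectorBasis i) = 1 := by
  have h := inner_self_eq_norm_sq_to_K (𝕜 := ℂ) (hX.eigenvectorBasis i)
  rw [hX.eigenvectorBasis.orthonormal.1 i] at h
  simp only [EuclideanSpace.inner_eq_star_dotProduct] at h
  simpa [dotProduct, WithLp.equiv, mul_comm] using h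

lemma real_smul_vec (r : ℝ) (v : Fin d → ℂ) : r • v = (r : ℂ) • v := by
  ext i; simp [Complex.real_smul]

lemma psd_smul_one_sub_iff {X : Matrix (Fin d) (Fin d) ℂ} (hX : X.IsHermitian) (c : ℝ) :
    (((c:ℂ)) • (1 : Matrix (Fin d) (Fin d) ℂ) - X).PosSemidef ↔ ∀ i, hX.eigenvalues i ≤ c := by
  constructor
  · intro h i
    have hq := h.dotProduct_mulVec_nonneg ⇑(hX.eigenvectorBasis i)
    rw [Matrix.sub_mulVec, Matrix.smul_mulVec, Matrix.one_mulVec,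
      hX.mulVec_eigenvectorBasis, real_smul_vec, dotProduct_sub, dotProduct_smul,
      dotProduct_smul, unit_dot X hX i] at hq
    simp only [smul_eq_mul, mul_one] at hq
    have : (0:ℂ) ≤ ((c - hX.eigenvalues i : ℝ) : ℂ) := by push_cast; exact hq
    linarith [Complex.zero_le_real.mp this]
  · intro h
    have hdecomp : ((c:ℂ)) • (1 : Matrix (Fin d) (Fin d) ℂ) - X =
        (hX.eigenvectorUnitary : Matrix (Fin d) (Fin d) ℂ) *
          diagonal (fun i => ((c - hX.eigenvalues i : ℝ) : ℂ)) *
          (hX.eigenvectorUnitary : Matrix (Fin d) (Fin d) ℂ)ᴴ := by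
      have hU : (hX.eigenvectorUnitary : Matrix (Fin d) (Fin d) ℂ) *
          star (hX.eigenvectorUnitary : Matrix (Fin d) (Fin d) ℂ) = 1 :=
        Matrix.mem_unitaryGroup_iff.mp hX.eigenvectorUnitary.2
      conv_lhs => rw [hX.spectral_theorem, Unitary.conjStarAlgAut_apply]
      rw [Matrix.star_eq_conjTranspose] at hU ⊢
      have h1 : ((c:ℂ)) • (1 : Matrix (Fin d) (Fin d) ℂ) =
          (hX.eigenvectorUnitary : Matrix (Fin d) (Fin d) ℂ) * ((c:ℂ) • 1) *
            (hX.eigenvectorUnitary : Matrix (Fin d) (Fin d) ℂ)ᴴ := by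
        rw [Matrix.mul_smul, Matrix.smul_mul, mul_one, hU]
      rw [h1, ← Matrix.sub_mul, ← Matrix.mul_sub]
      congr 1
      congr 1
      ext i j
      by_cases hij : i = j <;> simp [diagonal, hij, Matrix.one_apply, Complex.ofReal_sub]
    rw [hdecomp]
    exact (Matrix.posSemidef_diagonal_iff.mpr fun i => by
      rw [Complex.zero_le_real]; linarith [h i]).mul_mul_conjTranspose_same _

lemma psd_sub_smul_one_iff {X : Matrix (Fin d) (Fin d) ℂ} (hX : X.IsHermitian) (c : ℝ) :
    (X - ((c:ℂ)) • (1 : Matrix (Fin d) (Fin d) ℂ)).PosSemidef ↔ ∀ i, c ≤ hX.eigenvalues i := by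
  constructor
  · intro h i
    have hq := h.dotProduct_mulVec_nonneg ⇑(hX.eigenvectorBasis i)
    rw [Matrix.sub_mulVec, Matrix.smul_mulVec, Matrix.one_mulVec,
      hX.mulVec_eigenvectorBasis, real_smul_vec, dotProduct_sub, dotProduct_smul,
      dotProduct_smul, unit_dot X hX i] at hq
    simp only [smul_eq_mul, mul_one] at hq
    have : (0:ℂ) ≤ ((hX.eigenvalues i - c : ℝ) : ℂ) := by push_cast; exact hq
    linarith [Complex.zero_le_real.mp this]
  · intro h
    have hdecomp : X - ((c:ℂ)) • (1 : Matrix (Fin d) (Fin d) ℂ) =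
        (hX.eigenvectorUnitary : Matrix (Fin d) (Fin d) ℂ) *
          diagonal (fun i => ((hX.eigenvalues i - c : ℝ) : ℂ)) *
          (hX.eigenvectorUnitary : Matrix (Fin d) (Fin d) ℂ)ᴴ := by
      have hU : (hX.eigenvectorUnitary : Matrix (Fin d) (Fin d) ℂ) *
          star (hX.eigenvectorUnitary : Matrix (Fin d) (Fin d) ℂ) = 1 :=
        Matrix.mem_unitaryGroup_iff.mp hX.eigenvectorUnitary.2
      conv_lhs => rw [hX.spectral_theorem, Unitary.conjStarAlgAut_apply]
      rw [Matrix.star_eq_conjTranspose] at hU ⊢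
      have h1 : ((c:ℂ)) • (1 : Matrix (Fin d) (Fin d) ℂ) =
          (hX.eigenvectorUnitary : Matrix (Fin d) (Fin d) ℂ) * ((c:ℂ) • 1) *
            (hX.eigenvectorUnitary : Matrix (Fin d) (Fin d) ℂ)ᴴ := by
        rw [Matrix.mul_smul, Matrix.smul_mul, mul_one, hU]
      rw [h1, ← Matrix.sub_mul, ← Matrix.mul_sub]
      congr 1
      congr 1
      ext i j
      by_cases hij : i = j <;> simp [diagonal, hij, Matrix.one_apply, Complex.ofReal_sub]
    rw [hdecomp]
    exact (Matrix.posSemidef_diagonal_iff.mpr fun i => by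
      rw [Complex.zero_le_real]; linarith [h i]).mul_mul_conjTranspose_same _

lemma lamMax_eq (hd : 1 ≤ d) {X : Matrix (Fin d) (Fin d) ℂ} (hX : X.IsHermitian) :
    lamMax X = Finset.univ.sup' (Finset.univ_nonempty_iff.mpr ⟨⟨0, hd⟩⟩) hX.eigenvalues := by
  have hset : {c : ℝ | ((c : ℂ) • (1 : Matrix (Fin d) (Fin d) ℂ) - X).PosSemidef} =
      Set.Ici (Finset.univ.sup' (Finset.univ_nonempty_iff.mpr ⟨⟨0, hd⟩⟩) hX.eigenvalues) := by
    ext c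
    simp only [Set.mem_setOf_eq, Set.mem_Ici, psd_smul_one_sub_iff hX c, Finset.sup'_le_iff]
    exact ⟨fun h => fun i _ => h i, fun h i => h i (Finset.mem_univ i)⟩
  rw [lamMax, hset, csInf_Ici]

lemma lamMin_eq (hd : 1 ≤ d) {X : Matrix (Fin d) (Fin d) ℂ} (hX : X.IsHermitian) :
    lamMin X = Finset.univ.inf' (Finset.univ_nonempty_iff.mpr ⟨⟨0, hd⟩⟩) hX.eigenvalues := by
  have hset : {c : ℝ | (X - (c : ℂ) • (1 : Matrix (Fin d) (Fin d) ℂ)).PosSemidef} =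
      Set.Iic (Finset.univ.inf' (Finset.univ_nonempty_iff.mpr ⟨⟨0, hd⟩⟩) hX.eigenvalues) := by
    ext c
    simp only [Set.mem_setOf_eq, Set.mem_Iic, psd_sub_smul_one_iff hX c, Finset.le_inf'_iff]
    exact ⟨fun h => fun i _ => h i, fun h i => h i (Finset.mem_univ i)⟩
  rw [lamMin, hset, csSup_Iic]

lemma eig_le_lamMax (hd : 1 ≤ d) {X : Matrix (Fin d) (Fin d) ℂ} (hX : X.IsHermitian) (i : Fin d) :
    hX.eigenvalues i ≤ lamMax X := by
  rw [lamMax_eq hd hX]; exact Finset.le_sup' _ (Finset.mem_univ i)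

lemma lamMin_le_eig (hd : 1 ≤ d) {X : Matrix (Fin d) (Fin d) ℂ} (hX : X.IsHermitian) (i : Fin d) :
    lamMin X ≤ hX.eigenvalues i := by
  rw [lamMin_eq hd hX]; exact Finset.inf'_le _ (Finset.mem_univ i)

lemma lamMax_attained (hd : 1 ≤ d) {X : Matrix (Fin d) (Fin d) ℂ} (hX : X.IsHermitian) :
    ∃ i, hX.eigenvalues i = lamMax X := by
  rw [lamMax_eq hd hX]
  obtain ⟨i, _, hi⟩ := Finset.exists_mem_eq_sup' (Finset.univ_nonempty_iff.mpr ⟨⟨0, hd⟩⟩) hX.eigenvalues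
  exact ⟨i, hi.symm⟩

lemma lamMin_attained (hd : 1 ≤ d) {X : Matrix (Fin d) (Fin d) ℂ} (hX : X.IsHermitian) :
    ∃ i, hX.eigenvalues i = lamMin X := by
  rw [lamMin_eq hd hX]
  obtain ⟨i, _, hi⟩ := Finset.exists_mem_eq_inf' (Finset.univ_nonempty_iff.mpr ⟨⟨0, hd⟩⟩) hX.eigenvalues
  exact ⟨i, hi.symm⟩

lemma psd_lamMax (hd : 1 ≤ d) {X : Matrix (Fin d) (Fin d) ℂ} (hX : X.IsHermitian) :
    (((lamMax X : ℂ)) • (1 : Matrix (Fin d) (Fin d) ℂ) - X).PosSemidef :=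
  (psd_smul_one_sub_iff hX _).mpr (eig_le_lamMax hd hX)

lemma psd_lamMin (hd : 1 ≤ d) {X : Matrix (Fin d) (Fin d) ℂ} (hX : X.IsHermitian) :
    (X - ((lamMin X : ℂ)) • (1 : Matrix (Fin d) (Fin d) ℂ)).PosSemidef :=
  (psd_sub_smul_one_iff hX _).mpr (lamMin_le_eig hd hX)

lemma transform_eq {n : ℕ} (A : Fin n → Matrix (Fin d) (Fin d) ℂ) {P Q : Matrix (Fin d) (Fin d) ℂ}
    (h1 : ∑ k, (A k)ᴴ * A k = 1) (hPQ : ∑ k, (A k)ᴴ * P * A k = Q) (R : Matrix (Fin d) (Fin d) ℂ)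
    (c : ℂ) (hR : R = P - c • 1) :
    ∑ k, (A k)ᴴ * R * A k = Q - c • 1 := by
  subst hR
  have : ∀ k : Fin n, (A k)ᴴ * (P - c • 1) * A k = (A k)ᴴ * P * A k - c • ((A k)ᴴ * A k) := by
    intro k
    rw [Matrix.mul_sub, Matrix.sub_mul, Matrix.mul_smul, mul_one, Matrix.smul_mul]
  rw [Finset.sum_congr rfl fun k _ => this k, Finset.sum_sub_distrib, hPQ, ← Finset.smul_sum, h1]

lemma psd_transform {n : ℕ} (A : Fin n → Matrix (Fin d) (Fin d) ℂ) {R : Matrix (Fin d) (Fin d) ℂ}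
    (hR : R.PosSemidef) : (∑ k, (A k)ᴴ * R * A k).PosSemidef := by
  classical
  exact Finset.sum_induction _ _ (fun a b ha hb => ha.add hb) Matrix.PosSemidef.zero
    (fun k _ => hR.conjTranspose_mul_mul_same (A k))

lemma conj_vecMulVec (M : Matrix (Fin d) (Fin d) ℂ) (u a : Fin d → ℂ) :
    (vecMulVec u (star a))ᴴ * M * vecMulVec u (star a) =
      (dotProduct (star u) (M *ᵥ u)) • vecMulVec a (star a) := by
  ext i k
  simp only [Matrix.mul_apply, Matrix.conjTranspose_apply, Matrix.vecMulVec_apply,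
    Matrix.smul_apply, dotProduct, Matrix.mulVec, Pi.star_apply, star_mul', star_star,
    smul_eq_mul, Finset.sum_mul, Finset.mul_sum]
  rw [Finset.sum_comm]
  apply Finset.sum_congr rfl
  intro b _
  apply Finset.sum_congr rfl
  intro e _
  ring

lemma spectral_sum {X : Matrix (Fin d) (Fin d) ℂ} (hX : X.IsHermitian) :
    X = ∑ j, ((hX.eigenvalues j : ℂ)) •
      vecMulVec ⇑(hX.eigenvectorBasis j) (star ⇑(hX.eigenvectorBasis j)) := by
  conv_lhs => rw [hX.spectral_theorem, Unitary.conjStarAlgAut_apply]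
  ext i k
  simp only [Matrix.mul_apply, Matrix.diagonal_apply, Matrix.sum_apply, Matrix.smul_apply,
    Matrix.vecMulVec_apply, Matrix.star_apply, Pi.star_apply, smul_eq_mul, Function.comp,
    Matrix.IsHermitian.eigenvectorUnitary_apply, Finset.sum_ite_eq, Finset.mem_univ, if_true]
  apply Finset.sum_congr rfl
  intro j _
  simp only [mul_ite, mul_zero, Finset.sum_ite_eq', Finset.mem_univ, if_true]
  have : (RCLike.ofReal (hX.eigenvalues j) : ℂ) = ((hX.eigenvalues j : ℝ) : ℂ) := rfl
  rw [this]
  ring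

lemma one_sum {X : Matrix (Fin d) (Fin d) ℂ} (hX : X.IsHermitian) :
    (1 : Matrix (Fin d) (Fin d) ℂ) =
      ∑ j, vecMulVec ⇑(hX.eigenvectorBasis j) (star ⇑(hX.eigenvectorBasis j)) := by
  have hU : (hX.eigenvectorUnitary : Matrix (Fin d) (Fin d) ℂ) *
      star (hX.eigenvectorUnitary : Matrix (Fin d) (Fin d) ℂ) = 1 :=
    Matrix.mem_unitaryGroup_iff.mp hX.eigenvectorUnitary.2
  rw [← hU]
  ext i k
  simp only [Matrix.mul_apply, Matrix.sum_apply, Matrix.vecMulVec_apply, Pi.star_apply,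
    Matrix.star_apply, Matrix.IsHermitian.eigenvectorUnitary_apply]

lemma transform_eq' {n : ℕ} (A : Fin n → Matrix (Fin d) (Fin d) ℂ) {P Q : Matrix (Fin d) (Fin d) ℂ}
    (h1 : ∑ k, (A k)ᴴ * A k = 1) (hPQ : ∑ k, (A k)ᴴ * P * A k = Q) (c : ℂ) :
    ∑ k, (A k)ᴴ * (c • 1 - P) * A k = c • 1 - Q := by
  have : ∀ k : Fin n, (A k)ᴴ * (c • 1 - P) * A k = c • ((A k)ᴴ * A k) - (A k)ᴴ * P * A k := by
    intro k
    rw [Matrix.mul_sub, Matrix.sub_mul, Matrix.mul_smul, mul_one, Matrix.smul_mul]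
  rw [Finset.sum_congr rfl fun k _ => this k, Finset.sum_sub_distrib, hPQ, ← Finset.smul_sum, h1]

theorem clean_povm_stmt8' (d : ℕ) (hd : 1 ≤ d) (P Q : Matrix (Fin d) (Fin d) ℂ)
    (hP0 : P.PosSemidef) (hP1 : ((1 : Matrix (Fin d) (Fin d) ℂ) - P).PosSemidef)
    (hQ0 : Q.PosSemidef) (hQ1 : ((1 : Matrix (Fin d) (Fin d) ℂ) - Q).PosSemidef) :
    (∃ (n : ℕ) (A : Fin n → Matrix (Fin d) (Fin d) ℂ),
        ∑ k, (A k)ᴴ * A k = 1 ∧ ∑ k, (A k)ᴴ * P * A k = Q) ↔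
      lamMin P ≤ lamMin Q ∧ lamMax Q ≤ lamMax P := by
  have hPh : P.IsHermitian := hP0.1
  have hQh : Q.IsHermitian := hQ0.1
  constructor
  · rintro ⟨n, A, h1, hPQ⟩
    constructor
    · have hps := psd_transform A (psd_lamMin hd hPh)
      rw [transform_eq A h1 hPQ _ _ rfl] at hps
      have h2 := (psd_sub_smul_one_iff hQh (lamMin P)).mp hps
      obtain ⟨i, hi⟩ := lamMin_attained hd hQh
      rw [← hi]; exact h2 i
    · have hps := psd_transform A (psd_lamMax hd hPh)
      rw [transform_eq' A h1 hPQ _] at hps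
      have h2 := (psd_smul_one_sub_iff hQh (lamMax P)).mp hps
      obtain ⟨i, hi⟩ := lamMax_attained hd hQh
      rw [← hi]; exact h2 i
  · rintro ⟨hmin, hmax⟩
    set u : Fin d → ℂ := ⇑(hPh.eigenvectorBasis (Classical.choose (lamMax_attained hd hPh))) with hu_def
    set w : Fin d → ℂ := ⇑(hPh.eigenvectorBasis (Classical.choose (lamMin_attained hd hPh))) with hw_def
    have hu : dotProduct (star u) (P *ᵥ u) = ((lamMax P : ℝ) : ℂ) := by
      rw [hu_def, hPh.mulVec_eigenvectorBasis, real_smul_vec, dotProduct_smul,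
        unit_dot P hPh _, smul_eq_mul, mul_one,
        Classical.choose_spec (lamMax_attained hd hPh)]
    have hw : dotProduct (star w) (P *ᵥ w) = ((lamMin P : ℝ) : ℂ) := by
      rw [hw_def, hPh.mulVec_eigenvectorBasis, real_smul_vec, dotProduct_smul,
        unit_dot P hPh _, smul_eq_mul, mul_one,
        Classical.choose_spec (lamMin_attained hd hPh)]
    set v : Fin d → Fin d → ℂ := fun j => ⇑(hQh.eigenvectorBasis j) with hv_def
    set q : Fin d → ℝ := hQh.eigenvalues with hq_def
    have hq1 : ∀ j, lamMin P ≤ q j := fun j => le_trans hmin (lamMin_le_eig hd hQh j)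
    have hq2 : ∀ j, q j ≤ lamMax P := fun j => le_trans (eig_le_lamMax hd hQh j) hmax
    have hmM : lamMin P ≤ lamMax P := le_trans (hq1 ⟨0, hd⟩) (hq2 ⟨0, hd⟩)
    set t : Fin d → ℝ := fun j =>
      if lamMax P = lamMin P then 1 else (q j - lamMin P) / (lamMax P - lamMin P) with ht_def
    have ht0 : ∀ j, 0 ≤ t j := by
      intro j; rw [ht_def]
      by_cases h : lamMax P = lamMin P
      · simp [h]
      · simp only [h, if_false]
        have : lamMin P < lamMax P := lt_of_le_of_ne hmM (Ne.symm h)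
        exact div_nonneg (by linarith [hq1 j]) (by linarith)
    have ht1 : ∀ j, t j ≤ 1 := by
      intro j; rw [ht_def]
      by_cases h : lamMax P = lamMin P
      · simp [h]
      · simp only [h, if_false]
        have hlt : lamMin P < lamMax P := lt_of_le_of_ne hmM (Ne.symm h)
        rw [div_le_one (by linarith)]
        linarith [hq2 j]
    have hconv : ∀ j, t j * lamMax P + (1 - t j) * lamMin P = q j := by
      intro j; rw [ht_def]
      by_cases h : lamMax P = lamMin P
      · simp only [h, if_true]
        have := hq1 j; have := hq2 j
        simp; linarith
      · simp only [h, if_false]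
        have hlt : lamMin P < lamMax P := lt_of_le_of_ne hmM (Ne.symm h)
        have hD : lamMax P - lamMin P ≠ 0 := by linarith
        field_simp
        ring
    set W : Fin d → Matrix (Fin d) (Fin d) ℂ := fun j => vecMulVec (v j) (star (v j)) with hW_def
    set g : Fin d ⊕ Fin d → Matrix (Fin d) (Fin d) ℂ := Sum.elim
        (fun j => ((Real.sqrt (t j) : ℝ) : ℂ) • vecMulVec u (star (v j)))
        (fun j => ((Real.sqrt (1 - t j) : ℝ) : ℂ) • vecMulVec w (star (v j))) with hg_def
    -- generic conjugation computation
    have key : ∀ (M : Matrix (Fin d) (Fin d) ℂ) (x : Fin d → ℂ) (r : ℝ) (j : Fin d), 0 ≤ r →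
        ((((Real.sqrt r : ℝ) : ℂ) • vecMulVec x (star (v j)))ᴴ * M *
          (((Real.sqrt r : ℝ) : ℂ) • vecMulVec x (star (v j)))) =
        ((r : ℂ) * dotProduct (star x) (M *ᵥ x)) • W j := by
      intro M x r j hr
      rw [Matrix.conjTranspose_smul, Matrix.smul_mul, Matrix.smul_mul, Matrix.mul_smul,
        smul_smul, conj_vecMulVec M x (v j), smul_smul]
      congr 1
      rw [Complex.star_def, Complex.conj_ofReal, ← Complex.ofReal_mul,
        Real.mul_self_sqrt hr]
    have key1 : ∀ (x : Fin d → ℂ) (r : ℝ) (j : Fin d), 0 ≤ r →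
        dotProduct (star x) x = 1 →
        ((((Real.sqrt r : ℝ) : ℂ) • vecMulVec x (star (v j)))ᴴ *
          (((Real.sqrt r : ℝ) : ℂ) • vecMulVec x (star (v j)))) = (r : ℂ) • W j := by
      intro x r j hr hx
      have h := key 1 x r j hr
      rw [Matrix.mul_one, Matrix.one_mulVec, hx, mul_one] at h
      exact h
    refine ⟨d + d, fun k => g (finSumFinEquiv.symm k), ?_, ?_⟩
    · rw [Equiv.sum_comp finSumFinEquiv.symm (fun s => (g s)ᴴ * g s), Fintype.sum_sum_type]
      simp only [hg_def, Sum.elim_inl, Sum.elim_inr]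
      rw [← Finset.sum_add_distrib]
      have : ∀ j : Fin d, _ = _ := fun j => key1 u (t j) j (ht0 j) (unit_dot P hPh _)
      calc ∑ j : Fin d, ((((Real.sqrt (t j) : ℝ) : ℂ) • vecMulVec u (star (v j)))ᴴ *
              (((Real.sqrt (t j) : ℝ) : ℂ) • vecMulVec u (star (v j))) +
            (((Real.sqrt (1 - t j) : ℝ) : ℂ) • vecMulVec w (star (v j)))ᴴ *
              (((Real.sqrt (1 - t j) : ℝ) : ℂ) • vecMulVec w (star (v j))))
          = ∑ j : Fin d, (((t j : ℝ) : ℂ) • W j + (((1 - t j : ℝ)) : ℂ) • W j) := by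
            apply Finset.sum_congr rfl
            intro j _
            rw [key1 u (t j) j (ht0 j) (unit_dot P hPh _),
              key1 w (1 - t j) j (by linarith [ht1 j]) (unit_dot P hPh _)]
        _ = ∑ j : Fin d, W j := by
            apply Finset.sum_congr rfl
            intro j _
            rw [← add_smul]
            push_cast
            rw [show ((t j : ℂ) + (1 - (t j : ℂ))) = 1 by ring, one_smul]
        _ = 1 := (one_sum hQh).symm
    · rw [Equiv.sum_comp finSumFinEquiv.symm (fun s => (g s)ᴴ * P * g s), Fintype.sum_sum_type]
      simp only [hg_def, Sum.elim_inl, Sum.elim_inr]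
      rw [← Finset.sum_add_distrib]
      calc ∑ j : Fin d, ((((Real.sqrt (t j) : ℝ) : ℂ) • vecMulVec u (star (v j)))ᴴ * P *
              (((Real.sqrt (t j) : ℝ) : ℂ) • vecMulVec u (star (v j))) +
            (((Real.sqrt (1 - t j) : ℝ) : ℂ) • vecMulVec w (star (v j)))ᴴ * P *
              (((Real.sqrt (1 - t j) : ℝ) : ℂ) • vecMulVec w (star (v j))))
          = ∑ j : Fin d, ((q j : ℂ)) • W j := by
            apply Finset.sum_congr rfl
            intro j _
            rw [key P u (t j) j (ht0 j), key P w (1 - t j) j (by linarith [ht1 j]), hu, hw,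
              ← add_smul]
            congr 1
            rw [← hconv j]
            push_cast
            ring
        _ = Q := (spectral_sum hQh).symm


/-- cleanness ordering for effects: for effects `0 ≤ P ≤ 1`, `0 ≤ Q ≤ 1`,
there is a unital channel sending `P` to `Q` iff
`[λ_m(Q), λ_M(Q)] ⊆ [λ_m(P), λ_M(P)]`. -/
theorem clean_povm_stmt8 (d : ℕ) (hd : 1 ≤ d) (P Q : Matrix (Fin d) (Fin d) ℂ)
    (hP0 : P.PosSemidef) (hP1 : ((1 : Matrix (Fin d) (Fin d) ℂ) - P).PosSemidef)
    (hQ0 : Q.PosSemidef) (hQ1 : ((1 : Matrix (Fin d) (Fin d) ℂ) - Q).PosSemidef) :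
    (∃ (n : ℕ) (A : Fin n → Matrix (Fin d) (Fin d) ℂ),
        ∑ k, (A k)ᴴ * A k = 1 ∧ ∑ k, (A k)ᴴ * P * A k = Q) ↔
      lamMin P ≤ lamMin Q ∧ lamMax Q ≤ lamMax P := by
  exact clean_povm_stmt8' d hd P Q hP0 hP1 hQ0 hQ1
end
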